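/- Fix ℓ, k ∈ ℕ and assume g̃(k−ℓ+j) ≠ 0 for all integers j with 1 ≤ j ≤ ℓ. Then the vector ṽ_{ℓ,k} := Σ_{n=0}^ℓ M̃^{k,ℓ}_n |ℓ−n, k+n⟩ is an eigenvector of ΔA with eigenvalue a^(1)_ℓ · a^(2)_k, i.e. ΔA ṽ_{ℓ,k} = a^(1)_ℓ a^(2)_k ṽ_{ℓ,k}. -/
import Mathlib


/-- The basis vector `|ℓ,k⟩` of the space of finitely supported functions `ℕ × ℕ → ℂ`. -/
noncomputable def ket (p : ℕ × ℕ) : (ℕ × ℕ) →₀ ℂ := Finsupp.single p 1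

/-- The coefficient `M̃^{k,ℓ}_n = (η^n/n!) ∏_{j=1}^n e_{ℓ−j+1} f^(2)_{k+j−1} / g̃(k−ℓ+j)`,
where `e_m = m`, `f^(2)_m = 2λ₂ − m` and `g̃(x) = δ₂ − δ₁ + η(λ₁ − λ₂ + x)`. -/
noncomputable def Mtcoef (lam1 lam2 del1 del2 eta : ℂ) (k l n : ℕ) : ℂ :=
  (eta ^ n / (n.factorial : ℂ)) *
    ∏ j ∈ Finset.Icc 1 n,
      ((l : ℂ) - (j : ℂ) + 1) * (2 * lam2 - ((k : ℂ) + (j : ℂ) - 1)) /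
        (del2 - del1 + eta * (lam1 - lam2 + ((k : ℂ) - (l : ℂ) + (j : ℂ))))

/-- The vector `ṽ_{ℓ,k} = Σ_{n=0}^ℓ M̃^{k,ℓ}_n |ℓ−n, k+n⟩`. -/
noncomputable def vA (lam1 lam2 del1 del2 eta : ℂ) (l k : ℕ) : (ℕ × ℕ) →₀ ℂ :=
  ∑ n ∈ Finset.range (l + 1), Mtcoef lam1 lam2 del1 del2 eta k l n • ket (l - n, k + n)

lemma Mt_succ (lam1 lam2 del1 del2 eta : ℂ) (k l j : ℕ) :
    Mtcoef lam1 lam2 del1 del2 eta k l (j+1) =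
      Mtcoef lam1 lam2 del1 del2 eta k l j * (eta / ((j:ℂ)+1)) *
        (((l:ℂ) - ((j:ℂ)+1) + 1) * (2*lam2 - ((k:ℂ)+((j:ℂ)+1)-1)) /
          (del2 - del1 + eta * (lam1 - lam2 + ((k:ℂ) - (l:ℂ) + ((j:ℂ)+1))))) := by
  have h1 : ((j:ℂ)+1) ≠ 0 := Nat.cast_add_one_ne_zero j
  have h2 : ((j.factorial : ℂ)) ≠ 0 := Nat.cast_ne_zero.mpr j.factorial_ne_zero
  unfold Mtcoef
  rw [Finset.prod_Icc_succ_top (Nat.succ_le_succ (Nat.zero_le j)), Nat.factorial_succ]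
  push_cast
  generalize (∏ i ∈ Finset.Icc 1 j,
      ((l : ℂ) - (i : ℂ) + 1) * (2 * lam2 - ((k : ℂ) + (i : ℂ) - 1)) /
        (del2 - del1 + eta * (lam1 - lam2 + ((k : ℂ) - (l : ℂ) + (i : ℂ))))) = P
  generalize (((l:ℂ) - ((j:ℂ)+1) + 1) * (2*lam2 - ((k:ℂ)+((j:ℂ)+1)-1)) /
      (del2 - del1 + eta * (lam1 - lam2 + ((k:ℂ) - (l:ℂ) + ((j:ℂ)+1))))) = T
  field_simp
  ring

/-- `ṽ_{ℓ,k}` is an eigenvector of `ΔA` with eigenvalue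
`a^(1)_ℓ · a^(2)_k`, i.e. `ΔA ṽ_{ℓ,k} = a^(1)_ℓ a^(2)_k ṽ_{ℓ,k}`. -/
theorem deltaA_eigenvector (lam1 lam2 del1 del2 eta u : ℂ) (heta : eta ≠ 0) (l k : ℕ)
    (hg : ∀ j : ℕ, 1 ≤ j → j ≤ l →
      del2 - del1 + eta * (lam1 - lam2 + ((k : ℂ) - (l : ℂ) + (j : ℂ))) ≠ 0)
    (ΔA : ((ℕ × ℕ) →₀ ℂ) →ₗ[ℂ] ((ℕ × ℕ) →₀ ℂ))
    (hΔA : ∀ p r : ℕ, ΔA (ket (p, r)) =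
      ((u - del1 + eta * (lam1 - (p : ℂ))) * (u - del2 + eta * (lam2 - (r : ℂ)))) •
          ket (p, r) +
        (eta ^ 2 * (p : ℂ) * (2 * lam2 - (r : ℂ))) • ket (p - 1, r + 1)) :
    ΔA (vA lam1 lam2 del1 del2 eta l k) =
      ((u - del1 + eta * (lam1 - (l : ℂ))) * (u - del2 + eta * (lam2 - (k : ℂ)))) •
        vA lam1 lam2 del1 del2 eta l k := by
  set M : ℕ → ℂ := fun n => Mtcoef lam1 lam2 del1 del2 eta k l n with hM
  set E : ℂ := (u - del1 + eta * (lam1 - (l : ℂ))) * (u - del2 + eta * (lam2 - (k : ℂ))) with hE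
  unfold vA
  rw [map_sum, Finset.smul_sum]
  simp_rw [map_smul, hΔA, smul_add, smul_smul, ← hM]
  rw [Finset.sum_add_distrib]
  -- drop the vanishing top term of the shift sum
  rw [Finset.sum_range_succ (fun n => (M n * (eta ^ 2 * ((l - n : ℕ) : ℂ) * (2 * lam2 - ((k + n : ℕ) : ℂ)))) • ket (l - n - 1, k + n + 1))]
  simp only [Nat.sub_self, Nat.cast_zero, mul_zero, zero_mul, zero_smul, add_zero]
  rw [Finset.sum_range_succ' (fun n => (M n * ((u - del1 + eta * (lam1 - ((l - n : ℕ) : ℂ))) * (u - del2 + eta * (lam2 - ((k + n : ℕ) : ℂ))))) • ket (l - n, k + n)) l]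
  rw [Finset.sum_range_succ' (fun n => (E * M n) • ket (l - n, k + n)) l]
  rw [add_right_comm, ← Finset.sum_add_distrib]
  congr 1
  · apply Finset.sum_congr rfl
    intro i hi
    rw [Finset.mem_range] at hi
    have hle : i + 1 ≤ l := hi
    have hw : ket (l - i - 1, k + i + 1) = ket (l - (i + 1), k + (i + 1)) := rfl
    rw [hw, ← add_smul]
    congr 1
    have hc1 : ((l - (i + 1) : ℕ) : ℂ) = (l : ℂ) - ((i : ℂ) + 1) := by
      rw [Nat.cast_sub hle]; push_cast; ring
    have hc2 : ((l - i : ℕ) : ℂ) = (l : ℂ) - (i : ℂ) := by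
      rw [Nat.cast_sub (le_of_lt hi)]
    have hgne := hg (i + 1) (by omega) (by omega)
    push_cast at hgne
    have h1 : ((i : ℂ) + 1) ≠ 0 := Nat.cast_add_one_ne_zero i
    simp only [hM]
    rw [Mt_succ, hc1, hc2, hE]
    push_cast
    field_simp
    ring
  · simp [hE]
    ring
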